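/- arXiv:1712.00395 — 2 statements merged into one kernel-verified Lean document; each statement's English description precedes it below -/
import Mathlib

section
/- Non-reconstruction holds for the broadcast process on the d-ary tree if and only if lim_{n→∞} x_n = 0, where x_n = E[f_n(1, σ^1(n))] − π1. -/
/-!
Write `p A = P(σ_ρ = 1, σ(n) = A)`, `q A = P(σ_ρ = 2, σ(n) = A)` and `u = π₂ p - π₁ q`. Then
`d_TV(σ¹(n), σ²(n)) = ∑ |u| / (2 π₁ π₂)` and `x_n = ∑ u² / (p + q) / π₁`. Since `|u| ≤ p + q` and
`∑ (p + q) = 1`, Cauchy–Schwarz gives `(∑ |u|)² ≤ ∑ u² / (p + q) ≤ ∑ |u|`, so `d_TV` and `x_n` tend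
to zero together; as `d_TV ≤ 1`, that is the same as `limsup d_TV = 0`.
-/

open Finset Filter

namespace AsymIsing

/-- Level-`k` vertices of the rooted `d`-ary tree: paths of length `k` from the root. -/
abbrev Vert (d k : ℕ) : Type := Fin k → Fin d

/-- A spin configuration on levels `0, …, n` of the `d`-ary tree. -/
abbrev Conf (d n : ℕ) : Type := ∀ k : Fin (n + 1), Vert d k → Fin 2

/-- A spin configuration on level `n` only. -/
abbrev LConf (d n : ℕ) : Type := Vert d n → Fin 2

/-- The transition matrix of the asymmetric binary channel; the paper's state `1`
corresponds to the index `0` and the state `2` to the index `1`. -/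
noncomputable def Mmat (θ Δ : ℝ) : Fin 2 → Fin 2 → ℝ := fun i j =>
  if i = 0 then (if j = 0 then (1 + θ - Δ) / 2 else (1 - θ + Δ) / 2)
  else (if j = 0 then (1 - θ - Δ) / 2 else (1 + θ + Δ) / 2)

/-- The stationary distribution `π = (π₁, π₂)` of the channel. -/
noncomputable def pst (θ Δ : ℝ) : Fin 2 → ℝ := fun i =>
  if i = 0 then 1 / 2 - Δ / (2 * (1 - θ)) else 1 / 2 + Δ / (2 * (1 - θ))

/-- The root spin of a configuration. -/
def root {d n : ℕ} (σ : Conf d n) : Fin 2 := σ ⟨0, n.succ_pos⟩ (fun i => i.elim0)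

/-- The restriction of a configuration to the last (`n`-th) level. -/
def top {d n : ℕ} (σ : Conf d n) : LConf d n := σ (Fin.last n)

/-- The probability of a full configuration on levels `0, …, n` under the broadcast
process: the root is drawn from `π` and spins propagate along edges via `M`. -/
noncomputable def confProb (d : ℕ) (θ Δ : ℝ) (n : ℕ) (σ : Conf d n) : ℝ :=
  pst θ Δ (root σ) *
    ∏ k : Fin n, ∏ v : Vert d (k + 1),
      Mmat θ Δ (σ k.castSucc (v ∘ Fin.castSucc)) (σ k.succ v)

/-- `P(σ(n) = A)`: the marginal law of the level-`n` spins. -/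
noncomputable def levelProb (d : ℕ) (θ Δ : ℝ) (n : ℕ) (A : LConf d n) : ℝ :=
  ∑ σ : Conf d n, if top σ = A then confProb d θ Δ n σ else 0

/-- `P(σ_ρ = i, σ(n) = A)`. -/
noncomputable def jointProb (d : ℕ) (θ Δ : ℝ) (n : ℕ) (i : Fin 2) (A : LConf d n) : ℝ :=
  ∑ σ : Conf d n, if root σ = i ∧ top σ = A then confProb d θ Δ n σ else 0

/-- The posterior `f_n(i, A) = P(σ_ρ = i ∣ σ(n) = A)`. -/
noncomputable def post (d : ℕ) (θ Δ : ℝ) (n : ℕ) (i : Fin 2) (A : LConf d n) : ℝ :=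
  jointProb d θ Δ n i A / levelProb d θ Δ n A

/-- The law of `σ^i(n)`, i.e. `P(σ(n) = A ∣ σ_ρ = i)`. -/
noncomputable def condLevel (d : ℕ) (θ Δ : ℝ) (n : ℕ) (i : Fin 2) (A : LConf d n) : ℝ :=
  jointProb d θ Δ n i A / pst θ Δ i

/-- The total variation distance between `σ^1(n)` and `σ^2(n)`. -/
noncomputable def tvDist (d : ℕ) (θ Δ : ℝ) (n : ℕ) : ℝ :=
  (1 / 2) * ∑ A : LConf d n, |condLevel d θ Δ n 0 A - condLevel d θ Δ n 1 A|

/-- The reconstruction problem is solvable if `limsup_n d_TV(σ^1(n), σ^2(n)) > 0`. -/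
def solvable (d : ℕ) (θ Δ : ℝ) : Prop :=
  0 < Filter.limsup (fun n => tvDist d θ Δ n) Filter.atTop

/-- Non-reconstruction: `limsup_n d_TV(σ^1(n), σ^2(n)) = 0`. -/
def nonReconstruction (d : ℕ) (θ Δ : ℝ) : Prop :=
  Filter.limsup (fun n => tvDist d θ Δ n) Filter.atTop = 0

/-- Expectation of a function of the level-`n` configuration, conditioned on `σ_ρ = 1`. -/
noncomputable def expect1 (d : ℕ) (θ Δ : ℝ) (n : ℕ) (g : LConf d n → ℝ) : ℝ :=
  ∑ A : LConf d n, condLevel d θ Δ n 0 A * g A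

/-- `x_n = E f_n(1, σ^1(n)) − π₁`. -/
noncomputable def xseq (d : ℕ) (θ Δ : ℝ) (n : ℕ) : ℝ :=
  expect1 d θ Δ n (fun A => post d θ Δ n 0 A) - pst θ Δ 0

/-- `z_n = E (f_n(1, σ^1(n)) − π₁)²`. -/
noncomputable def zseq (d : ℕ) (θ Δ : ℝ) (n : ℕ) : ℝ :=
  expect1 d θ Δ n (fun A => (post d θ Δ n 0 A - pst θ Δ 0) ^ 2)

/-- The restriction of a level-`(n+1)` configuration to the subtree of the `j`-th
child of the root (paths starting with `j`). -/
def restrictChild {d n : ℕ} (j : Fin d) (A : LConf d (n + 1)) : LConf d n :=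
  fun w => A (Fin.cons j w)

/-- `Y_j = f_n(1, σ_j(n+1))`, as a function of the level-`(n+1)` configuration. -/
noncomputable def Yfun (d : ℕ) (θ Δ : ℝ) (n : ℕ) (j : Fin d) (A : LConf d (n + 1)) : ℝ :=
  post d θ Δ n 0 (restrictChild j A)

/-- `Z₁ = ∏_j (1 + (θ/π₁)(Y_j − π₁))`, as a function of the level-`(n+1)` configuration. -/
noncomputable def Z1fun (d : ℕ) (θ Δ : ℝ) (n : ℕ) (A : LConf d (n + 1)) : ℝ :=
  ∏ j : Fin d, (1 + (θ / pst θ Δ 0) * (Yfun d θ Δ n j A - pst θ Δ 0))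

/-- `Z₂ = ∏_j (1 − (θ/π₂)(Y_j − π₁))`, as a function of the level-`(n+1)` configuration. -/
noncomputable def Z2fun (d : ℕ) (θ Δ : ℝ) (n : ℕ) (A : LConf d (n + 1)) : ℝ :=
  ∏ j : Fin d, (1 - (θ / pst θ Δ 1) * (Yfun d θ Δ n j A - pst θ Δ 0))

/-- The value of `Δ` making `π = (π₁, π₂)` the stationary distribution of the channel
with second eigenvalue `θ`, namely `Δ = (1 − θ)(π₂ − π₁)`. -/
noncomputable def Dlt (θ π1 π2 : ℝ) : ℝ := (1 - θ) * (π2 - π1)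

/-- The Gaussian-approximation function
`f(s) = E[π₁ e^{sμ₁+√s W₁} / (π₁ e^{sμ₁+√s W₁} + π₂ e^{sμ₂+√s W₂})] − π₁`,
where `μ₁ = 1/(2π₁)`, `μ₂ = −(1+π₂)/(2π₂²)`, `W₁ ∼ N(0, 1/π₁)` (realized as `w/√π₁`
for `w` standard Gaussian) and `W₂ = −(π₁/π₂)·W₁`. -/
noncomputable def gfun (π1 π2 : ℝ) (s : ℝ) : ℝ :=
  (∫ w : ℝ,
      (π1 * Real.exp (s * (1 / (2 * π1)) + Real.sqrt s * (w / Real.sqrt π1))) /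
        (π1 * Real.exp (s * (1 / (2 * π1)) + Real.sqrt s * (w / Real.sqrt π1)) +
          π2 * Real.exp (s * (-(1 + π2) / (2 * π2 ^ 2)) +
            Real.sqrt s * (-(π1 / π2) * (w / Real.sqrt π1))))
    ∂(ProbabilityTheory.gaussianReal 0 1)) - π1

section TwoPointPrior

variable {α : Type*} [Fintype α]

theorem abs_mul_sub_mul_le_add {p q a b : ℝ} (hp : 0 ≤ p) (hq : 0 ≤ q) (ha : 0 ≤ a) (hb : 0 ≤ b)
    (hab : a + b = 1) : |b * p - a * q| ≤ p + q := by
  rw [abs_le]; constructor <;> nlinarith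

theorem sum_sq_div_le_sum_abs {u L : α → ℝ} (h : ∀ x, |u x| ≤ L x) :
    ∑ x, u x ^ 2 / L x ≤ ∑ x, |u x| := by
  refine Finset.sum_le_sum fun x _ => ?_
  rcases (abs_nonneg (u x)).trans (h x) |>.eq_or_lt with hL | hL
  · simp [← hL]
  · rw [div_le_iff₀ hL, ← sq_abs, sq]
    exact mul_le_mul_of_nonneg_left (h x) (abs_nonneg _)

theorem sq_sum_abs_le_sum_mul_sum_sq_div {u L : α → ℝ} (h : ∀ x, |u x| ≤ L x) :
    (∑ x, |u x|) ^ 2 ≤ (∑ x, L x) * ∑ x, u x ^ 2 / L x := by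
  have hL : ∀ x, 0 ≤ L x := fun x => (abs_nonneg _).trans (h x)
  refine Finset.sum_sq_le_sum_mul_sum_of_sq_le_mul _ (fun x _ => hL x)
    (fun x _ => div_nonneg (sq_nonneg _) (hL x)) fun x _ => ?_
  rcases (hL x).eq_or_lt with h0 | hpos
  · have : u x = 0 := abs_eq_zero.1 (le_antisymm (h0 ▸ h x) (abs_nonneg _))
    simp [this]
  · rw [sq_abs, mul_div_cancel₀ _ hpos.ne']

noncomputable def tvDistance (μ ν : α → ℝ) : ℝ := 1 / 2 * ∑ x, |μ x - ν x|

/-- For the joint law `p x = P(H₁, x)`, `q x = P(H₂, x)` of a hypothesis and an observation, with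
prior `P(H₁) = a`: the expected posterior of `H₁` when `H₁` holds, minus the prior. -/
noncomputable def posteriorExcess (p q : α → ℝ) (a : ℝ) : ℝ :=
  ∑ x, p x / a * (p x / (p x + q x)) - a

theorem tvDistance_nonneg (μ ν : α → ℝ) : 0 ≤ tvDistance μ ν :=
  mul_nonneg (by norm_num) (Finset.sum_nonneg fun x _ => abs_nonneg _)

variable {p q : α → ℝ} {a b : ℝ}

theorem tvDistance_div_eq (ha : 0 < a) (hb : 0 < b) :
    tvDistance (fun x => p x / a) (fun x => q x / b) =
      (∑ x, |b * p x - a * q x|) / (2 * (a * b)) := by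
  have key : ∀ x, |p x / a - q x / b| = |b * p x - a * q x| / (a * b) := fun x => by
    rw [div_sub_div _ _ ha.ne' hb.ne', abs_div, abs_of_pos (mul_pos ha hb)]
    ring_nf
  simp only [tvDistance, key, ← Finset.sum_div]
  field_simp

theorem tvDistance_div_le_one (hp : ∀ x, 0 ≤ p x) (hq : ∀ x, 0 ≤ q x)
    (hpa : ∑ x, p x = a) (hqb : ∑ x, q x = b) (ha : 0 < a) (hb : 0 < b) :
    tvDistance (fun x => p x / a) (fun x => q x / b) ≤ 1 := by
  have : ∑ x, |p x / a - q x / b| ≤ ∑ x, (p x / a + q x / b) :=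
    Finset.sum_le_sum fun x _ => (abs_sub _ _).trans_eq <| by
      rw [abs_of_nonneg (div_nonneg (hp x) ha.le), abs_of_nonneg (div_nonneg (hq x) hb.le)]
  rw [Finset.sum_add_distrib, ← Finset.sum_div, ← Finset.sum_div, hpa, hqb,
    div_self ha.ne', div_self hb.ne'] at this
  unfold tvDistance
  linarith

theorem posteriorExcess_eq (hp : ∀ x, 0 ≤ p x) (hq : ∀ x, 0 ≤ q x)
    (hpa : ∑ x, p x = a) (hqb : ∑ x, q x = b) (hab : a + b = 1) (ha : 0 < a) :
    posteriorExcess p q a = (∑ x, (b * p x - a * q x) ^ 2 / (p x + q x)) / a := by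
  have key : ∀ x, p x / a * (p x / (p x + q x)) =
      (b * p x - a * q x) ^ 2 / (p x + q x) / a + (2 * p x - a * (p x + q x)) := fun x => by
    rcases (add_nonneg (hp x) (hq x)).eq_or_lt with hL | hL
    · have h0 : p x = 0 := by linarith [hp x, hq x]
      have h1 : q x = 0 := by linarith [hp x, hq x]
      simp [h0, h1]
    · obtain rfl : b = 1 - a := by linarith
      field_simp
      ring
  simp only [posteriorExcess, key, Finset.sum_add_distrib, ← Finset.sum_div,
    Finset.sum_sub_distrib, ← Finset.mul_sum, hpa, hqb, hab]
  ring

theorem posteriorExcess_nonneg (hp : ∀ x, 0 ≤ p x) (hq : ∀ x, 0 ≤ q x)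
    (hpa : ∑ x, p x = a) (hqb : ∑ x, q x = b) (hab : a + b = 1) (ha : 0 < a) :
    0 ≤ posteriorExcess p q a := by
  rw [posteriorExcess_eq hp hq hpa hqb hab ha]
  exact div_nonneg (Finset.sum_nonneg fun x _ =>
    div_nonneg (sq_nonneg _) (add_nonneg (hp x) (hq x))) ha.le

theorem posteriorExcess_le_tvDistance (hp : ∀ x, 0 ≤ p x) (hq : ∀ x, 0 ≤ q x)
    (hpa : ∑ x, p x = a) (hqb : ∑ x, q x = b) (hab : a + b = 1) (ha : 0 < a) (hb : 0 < b) :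
    posteriorExcess p q a ≤ 2 * b * tvDistance (fun x => p x / a) (fun x => q x / b) := by
  have hgap x := abs_mul_sub_mul_le_add (hp x) (hq x) ha.le hb.le hab
  calc posteriorExcess p q a = (∑ x, (b * p x - a * q x) ^ 2 / (p x + q x)) / a :=
        posteriorExcess_eq hp hq hpa hqb hab ha
    _ ≤ (∑ x, |b * p x - a * q x|) / a :=
        div_le_div_of_nonneg_right (sum_sq_div_le_sum_abs hgap) ha.le
    _ = 2 * b * tvDistance (fun x => p x / a) (fun x => q x / b) := by
        rw [tvDistance_div_eq ha hb]; field_simp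

theorem sq_tvDistance_le_posteriorExcess (hp : ∀ x, 0 ≤ p x) (hq : ∀ x, 0 ≤ q x)
    (hpa : ∑ x, p x = a) (hqb : ∑ x, q x = b) (hab : a + b = 1) (ha : 0 < a) (hb : 0 < b) :
    4 * a * b ^ 2 * tvDistance (fun x => p x / a) (fun x => q x / b) ^ 2 ≤
      posteriorExcess p q a := by
  have hgap x := abs_mul_sub_mul_le_add (hp x) (hq x) ha.le hb.le hab
  have hL : ∑ x, (p x + q x) = 1 := by rw [Finset.sum_add_distrib, hpa, hqb, hab]
  have hcs := sq_sum_abs_le_sum_mul_sum_sq_div hgap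
  rw [hL, one_mul] at hcs
  calc 4 * a * b ^ 2 * tvDistance (fun x => p x / a) (fun x => q x / b) ^ 2
      = (∑ x, |b * p x - a * q x|) ^ 2 / a := by
        rw [tvDistance_div_eq ha hb]; field_simp; ring
    _ ≤ (∑ x, (b * p x - a * q x) ^ 2 / (p x + q x)) / a := by gcongr
    _ = posteriorExcess p q a := (posteriorExcess_eq hp hq hpa hqb hab ha).symm

end TwoPointPrior

section Limits

variable {ι : Type*} {l : Filter ι}

theorem limsup_eq_zero_iff_tendsto_zero [l.NeBot] {f : ι → ℝ} {C : ℝ} (h0 : ∀ i, 0 ≤ f i)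
    (hC : ∀ i, f i ≤ C) : limsup f l = 0 ↔ Tendsto f l (nhds 0) := by
  have hbdd : IsBoundedUnder (· ≤ ·) l f := isBoundedUnder_of ⟨C, hC⟩
  have hbdd' : IsBoundedUnder (· ≥ ·) l f := isBoundedUnder_of ⟨0, h0⟩
  refine ⟨fun h => tendsto_of_le_liminf_of_limsup_le ?_ h.le hbdd hbdd', Tendsto.limsup_eq⟩
  exact le_liminf_of_le hbdd.isCoboundedUnder_ge (Eventually.of_forall h0)

theorem tendsto_zero_iff_of_le_mul_of_mul_sq_le {f g : ι → ℝ} {c C : ℝ} (hf : ∀ i, 0 ≤ f i)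
    (hg : ∀ i, 0 ≤ g i) (hgf : ∀ i, g i ≤ c * f i) (hC : 0 < C) (hfg : ∀ i, C * f i ^ 2 ≤ g i) :
    Tendsto f l (nhds 0) ↔ Tendsto g l (nhds 0) := by
  refine ⟨fun h => squeeze_zero hg hgf (by simpa using h.const_mul c), fun h => ?_⟩
  refine squeeze_zero hf (fun i => Real.le_sqrt_of_sq_le ?_) (by simpa using (h.div_const C).sqrt)
  rw [le_div_iff₀ hC, mul_comm]
  exact hfg i

end Limits

section Broadcast

variable {d : ℕ} {θ Δ : ℝ}

theorem sum_Mmat (i : Fin 2) : ∑ j, Mmat θ Δ i j = 1 := by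
  fin_cases i <;> simp [Fin.sum_univ_two, Mmat] <;> ring

theorem pst_zero_add_pst_one : pst θ Δ 0 + pst θ Δ 1 = 1 := by
  simp [pst]; ring

theorem pst_pos (hM : ∀ i j, 0 < Mmat θ Δ i j) (i : Fin 2) : 0 < pst θ Δ i := by
  have h₁ := hM 1 0
  have h₂ := hM 0 1
  simp only [Mmat] at h₁ h₂
  norm_num at h₁ h₂
  have hθ : 0 < 1 - θ := by linarith
  revert i
  refine Fin.forall_fin_two.2 ⟨?_, ?_⟩
  · have : pst θ Δ 0 = (1 - θ - Δ) / (2 * (1 - θ)) := by simp [pst]; field_simp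
    rw [this]; apply div_pos <;> linarith
  · have : pst θ Δ 1 = (1 - θ + Δ) / (2 * (1 - θ)) := by simp [pst]; field_simp
    rw [this]; apply div_pos <;> linarith

theorem sum_prod_eq_one_of_sum_eq_one {ι β γ : Type*} [Fintype ι] [DecidableEq ι] [Fintype γ]
    {K : β → γ → ℝ} (hK : ∀ b, ∑ j, K b j = 1) (c : ι → β) :
    ∑ B : ι → γ, ∏ v, K (c v) (B v) = 1 := by
  rw [← Fintype.prod_sum]
  simp [hK]

noncomputable def edgeWeight (d : ℕ) (θ Δ : ℝ) (n : ℕ) (σ : Conf d n) : ℝ :=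
  ∏ k : Fin n, ∏ v : Vert d (k + 1),
    Mmat θ Δ (σ k.castSucc (v ∘ Fin.castSucc)) (σ k.succ v)

theorem confProb_eq (n : ℕ) (σ : Conf d n) :
    confProb d θ Δ n σ = pst θ Δ (root σ) * edgeWeight d θ Δ n σ := rfl

def Conf.snoc {n : ℕ} (τ : Conf d n) (B : LConf d (n + 1)) : Conf d (n + 1) :=
  Fin.snoc (α := fun k : Fin (n + 2) => Vert d k → Fin 2) τ B

theorem Conf.snoc_castSucc {n : ℕ} (τ : Conf d n) (B : LConf d (n + 1)) (k : Fin (n + 1)) :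
    τ.snoc B k.castSucc = τ k :=
  Fin.snoc_castSucc (α := fun k : Fin (n + 2) => Vert d k → Fin 2) ..

theorem Conf.snoc_last {n : ℕ} (τ : Conf d n) (B : LConf d (n + 1)) :
    τ.snoc B (Fin.last (n + 1)) = B :=
  Fin.snoc_last (α := fun k : Fin (n + 2) => Vert d k → Fin 2) ..

theorem root_snoc {n : ℕ} (τ : Conf d n) (B : LConf d (n + 1)) : root (τ.snoc B) = root τ :=
  congrFun (τ.snoc_castSucc B 0) _

def Conf.snocEquiv (d n : ℕ) : Conf d n × LConf d (n + 1) ≃ Conf d (n + 1) :=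
  (Equiv.prodComm _ _).trans (Fin.snocEquiv (fun k : Fin (n + 2) => Vert d k → Fin 2))

theorem Conf.snocEquiv_apply {n : ℕ} (p : Conf d n × LConf d (n + 1)) :
    Conf.snocEquiv d n p = p.1.snoc p.2 := rfl

theorem edgeWeight_snoc {n : ℕ} (τ : Conf d n) (B : LConf d (n + 1)) :
    edgeWeight d θ Δ (n + 1) (τ.snoc B) =
      edgeWeight d θ Δ n τ *
        ∏ v : Vert d (n + 1), Mmat θ Δ (τ (Fin.last n) (v ∘ Fin.castSucc)) (B v) := by
  unfold edgeWeight
  rw [Fin.prod_univ_castSucc]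
  simp only [Fin.succ_castSucc, Fin.succ_last, Conf.snoc_castSucc, Conf.snoc_last]
  rfl

theorem root_bijective_zero : Function.Bijective (root : Conf d 0 → Fin 2) := by
  refine ⟨fun σ τ h => ?_, fun i => ⟨fun _ _ => i, rfl⟩⟩
  funext k v
  obtain rfl : k = 0 := Fin.fin_one_eq_zero k
  obtain rfl : v = fun i => i.elim0 := Subsingleton.elim (α := Fin 0 → Fin d) _ _
  exact h

theorem sum_edgeWeight_root_eq (n : ℕ) (i : Fin 2) :
    ∑ σ : Conf d n, (if root σ = i then edgeWeight d θ Δ n σ else 0) = 1 := by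
  induction n with
  | zero =>
    rw [Fintype.sum_bijective _ root_bijective_zero _ (fun j => if j = i then 1 else 0)
      (fun σ => by simp [edgeWeight])]
    simp
  | succ n ih =>
    rw [← (Conf.snocEquiv d n).sum_comp, Fintype.sum_prod_type, ← ih]
    refine Finset.sum_congr rfl fun τ _ => ?_
    simp only [Conf.snocEquiv_apply, root_snoc, edgeWeight_snoc]
    split_ifs
    · rw [← Finset.mul_sum, sum_prod_eq_one_of_sum_eq_one sum_Mmat, mul_one]
    · simp

theorem jointProb_nonneg (hM : ∀ i j, 0 < Mmat θ Δ i j) (n : ℕ) (i : Fin 2) (A : LConf d n) :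
    0 ≤ jointProb d θ Δ n i A :=
  Finset.sum_nonneg fun σ _ => by
    split_ifs
    · exact mul_nonneg (pst_pos hM _).le
        (Finset.prod_nonneg fun k _ => Finset.prod_nonneg fun v _ => (hM _ _).le)
    · exact le_rfl

theorem levelProb_eq_add (n : ℕ) (A : LConf d n) :
    levelProb d θ Δ n A = jointProb d θ Δ n 0 A + jointProb d θ Δ n 1 A := by
  unfold jointProb levelProb
  rw [← Finset.sum_add_distrib]
  refine Finset.sum_congr rfl fun σ _ => ?_
  rcases Fin.exists_fin_two.1 ⟨root σ, rfl⟩ with h | h <;> by_cases ht : top σ = A <;> simp [h, ht]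

theorem sum_jointProb (n : ℕ) (i : Fin 2) :
    ∑ A : LConf d n, jointProb d θ Δ n i A = pst θ Δ i := by
  unfold jointProb
  rw [Finset.sum_comm, ← mul_one (pst θ Δ i),
    ← sum_edgeWeight_root_eq (d := d) (θ := θ) (Δ := Δ) n i, Finset.mul_sum]
  refine Finset.sum_congr rfl fun σ _ => ?_
  by_cases h : root σ = i
  · simp [h, confProb_eq]
  · simp [h]

theorem xseq_eq (n : ℕ) :
    xseq d θ Δ n = posteriorExcess (jointProb d θ Δ n 0) (jointProb d θ Δ n 1) (pst θ Δ 0) := by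
  simp only [xseq, expect1, posteriorExcess, condLevel, post, levelProb_eq_add]

theorem tvDist_nonneg (n : ℕ) : 0 ≤ tvDist d θ Δ n := tvDistance_nonneg _ _

theorem tvDist_le_one (hM : ∀ i j, 0 < Mmat θ Δ i j) (n : ℕ) : tvDist d θ Δ n ≤ 1 :=
  tvDistance_div_le_one (jointProb_nonneg hM n 0) (jointProb_nonneg hM n 1)
    (sum_jointProb n 0) (sum_jointProb n 1) (pst_pos hM 0) (pst_pos hM 1)

theorem xseq_nonneg (hM : ∀ i j, 0 < Mmat θ Δ i j) (n : ℕ) : 0 ≤ xseq d θ Δ n := by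
  rw [xseq_eq]
  exact posteriorExcess_nonneg (jointProb_nonneg hM n 0) (jointProb_nonneg hM n 1)
    (sum_jointProb n 0) (sum_jointProb n 1) pst_zero_add_pst_one (pst_pos hM 0)

theorem xseq_le_tvDist (hM : ∀ i j, 0 < Mmat θ Δ i j) (n : ℕ) :
    xseq d θ Δ n ≤ 2 * pst θ Δ 1 * tvDist d θ Δ n := by
  rw [xseq_eq]
  exact posteriorExcess_le_tvDistance (jointProb_nonneg hM n 0) (jointProb_nonneg hM n 1)
    (sum_jointProb n 0) (sum_jointProb n 1) pst_zero_add_pst_one (pst_pos hM 0) (pst_pos hM 1)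

theorem sq_tvDist_le_xseq (hM : ∀ i j, 0 < Mmat θ Δ i j) (n : ℕ) :
    4 * pst θ Δ 0 * pst θ Δ 1 ^ 2 * tvDist d θ Δ n ^ 2 ≤ xseq d θ Δ n := by
  rw [xseq_eq]
  exact sq_tvDistance_le_posteriorExcess (jointProb_nonneg hM n 0) (jointProb_nonneg hM n 1)
    (sum_jointProb n 0) (sum_jointProb n 1) pst_zero_add_pst_one (pst_pos hM 0) (pst_pos hM 1)

end Broadcast

theorem nonReconstruction_iff_xseq_tendsto_zero_general (d : ℕ) (θ Δ : ℝ) (hM : ∀ i j, 0 < Mmat θ Δ i j) :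
    nonReconstruction d θ Δ ↔
      Filter.Tendsto (xseq d θ Δ) Filter.atTop (nhds 0) := by
  have hπ₁ := pst_pos hM 0
  have hπ₂ := pst_pos hM 1
  rw [nonReconstruction, limsup_eq_zero_iff_tendsto_zero tvDist_nonneg (tvDist_le_one hM)]
  exact tendsto_zero_iff_of_le_mul_of_mul_sq_le tvDist_nonneg (xseq_nonneg hM)
    (xseq_le_tvDist hM) (by positivity) (sq_tvDist_le_xseq hM)

/-- Non-reconstruction holds if and only if `lim_n x_n = 0`. -/
theorem nonReconstruction_iff_xseq_tendsto_zero (d : ℕ) (hd : 2 ≤ d) (θ Δ : ℝ) (hθ0 : θ ≠ 0) (hθ1 : |θ| < 1)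
    (hθΔ : |θ| + |Δ| ≤ 1) (hM : ∀ i j, 0 < Mmat θ Δ i j)
    (hord : pst θ Δ 1 ≤ pst θ Δ 0) :
    nonReconstruction d θ Δ ↔
      Filter.Tendsto (xseq d θ Δ) Filter.atTop (nhds 0) :=
  nonReconstruction_iff_xseq_tendsto_zero_general d θ Δ hM

end AsymIsing
end

section
/- The function f is continuously differentiable and monotone increasing on the interval (0, π2]. -/
/-! With `σ = √s / (√π₁ π₂)` and `c = log (π₂ / π₁)` the integrand is `sigmoid (σw + σ²/2 - c)`,
so `f(s) + π₁ = Φ(σ)` with `Φ(σ) = E[sigmoid (σW + σ²/2 - c)]` for a standard Gaussian `W`.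
Dominated differentiation makes `Φ` a `C¹` function. Shifting `W ↦ W - σ` multiplies the Gaussian
density by `exp (σW - σ²/2)`, and since `eᵘ sigmoid'(u) = sigmoid(u)²` this yields
`Φ'(σ) = e^c E[W sigmoid (σW - σ²/2 - c)²]`. For `σ ≥ 0` the factor after `W` is monotone in `W`,
and `E[W m(W)] ≥ 0` for bounded monotone `m` (pair `W` with `-W`), so `Φ` is nondecreasing. -/

open Finset Filter

section GaussianSigmoid

open MeasureTheory ProbabilityTheory Real Set

lemma gaussianPDFReal_zero_one (x : ℝ) :
    gaussianPDFReal 0 1 x = (√(2 * π))⁻¹ * exp (-x ^ 2 / 2) := by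
  simp [gaussianPDFReal]

lemma gaussianPDFReal_zero_one_neg (x : ℝ) :
    gaussianPDFReal 0 1 (-x) = gaussianPDFReal 0 1 x := by
  simp [gaussianPDFReal_zero_one]

lemma gaussianPDFReal_zero_one_sub (y σ : ℝ) :
    gaussianPDFReal 0 1 (y - σ) = exp (σ * y - σ ^ 2 / 2) * gaussianPDFReal 0 1 y := by
  rw [gaussianPDFReal_zero_one, gaussianPDFReal_zero_one, mul_left_comm, ← exp_add]
  ring_nf

lemma integrable_abs_mul_gaussianPDFReal : Integrable fun x => |x| * gaussianPDFReal 0 1 x := by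
  refine (((integrable_mul_exp_neg_mul_sq (b := 1 / 2) (by norm_num)).abs.const_mul
    (√(2 * π))⁻¹)).congr (ae_of_all _ fun x => ?_)
  simp only [gaussianPDFReal_zero_one, abs_mul, abs_exp]
  ring_nf

lemma integral_mul_gaussianPDFReal_mul_nonneg {m : ℝ → ℝ} (hm : Monotone m) {C : ℝ}
    (hC : ∀ x, |m x| ≤ C) : 0 ≤ ∫ x, x * gaussianPDFReal 0 1 x * m x := by
  set g := fun x => x * gaussianPDFReal 0 1 x * m x
  have hg : Integrable g := by
    refine (integrable_abs_mul_gaussianPDFReal.mul_const C).mono'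
      ((measurable_id.mul (measurable_gaussianPDFReal 0 1)).mul hm.measurable).aestronglyMeasurable
      (ae_of_all _ fun x => ?_)
    rw [norm_mul, Real.norm_eq_abs, abs_mul, abs_of_nonneg (gaussianPDFReal_nonneg 0 1 x)]
    exact mul_le_mul_of_nonneg_left (hC x)
      (mul_nonneg (abs_nonneg x) (gaussianPDFReal_nonneg 0 1 x))
  have hpair : ∀ x, 0 ≤ g x + g (-x) := fun x => by
    have : g x + g (-x) = gaussianPDFReal 0 1 x * (x * (m x - m (-x))) := by
      simp only [g, gaussianPDFReal_zero_one_neg]; ring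
    rw [this]
    refine mul_nonneg (gaussianPDFReal_nonneg 0 1 x) ?_
    rcases le_total 0 x with hx | hx
    · exact mul_nonneg hx (sub_nonneg.2 (hm (by linarith)))
    · exact mul_nonneg_of_nonpos_of_nonpos hx (sub_nonpos.2 (hm (by linarith)))
  have hint := integral_nonneg (μ := volume) (f := fun x => g x + g (-x)) hpair
  rw [integral_add hg hg.comp_neg, integral_neg_eq_self g] at hint
  linarith

lemma sigmoid_mul_one_sub_sigmoid_nonneg (x : ℝ) : 0 ≤ sigmoid x * (1 - sigmoid x) :=
  mul_nonneg (sigmoid_nonneg x) (sub_nonneg.2 (sigmoid_le_one x))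

lemma sigmoid_mul_one_sub_sigmoid_le (x : ℝ) : sigmoid x * (1 - sigmoid x) ≤ 1 / 4 := by
  nlinarith [sq_nonneg (sigmoid x - 1 / 2)]

lemma exp_mul_sigmoid_mul_one_sub_sigmoid (x : ℝ) :
    exp x * (sigmoid x * (1 - sigmoid x)) = sigmoid x ^ 2 := by
  have h := sigmoid_mul_rexp_neg (-x)
  rw [neg_neg] at h
  rw [← sigmoid_neg]
  linear_combination sigmoid x * h

noncomputable def gaussianSigmoidMean (c σ : ℝ) : ℝ :=
  ∫ x, gaussianPDFReal 0 1 x * sigmoid (σ * x + σ ^ 2 / 2 - c)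

noncomputable def gaussianSigmoidMeanDeriv (c σ : ℝ) : ℝ :=
  exp c * ∫ y, y * gaussianPDFReal 0 1 y * sigmoid (σ * y - σ ^ 2 / 2 - c) ^ 2

lemma hasDerivAt_sigmoid_quadratic (c x σ : ℝ) :
    HasDerivAt (fun σ => sigmoid (σ * x + σ ^ 2 / 2 - c))
      ((x + σ) * (sigmoid (σ * x + σ ^ 2 / 2 - c) * (1 - sigmoid (σ * x + σ ^ 2 / 2 - c)))) σ := by
  have h : HasDerivAt (fun σ : ℝ => σ * x + σ ^ 2 / 2 - c) (x + σ) σ := by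
    have := (((hasDerivAt_id' σ).mul_const x).add ((hasDerivAt_pow 2 σ).div_const 2)).sub_const c
    exact this.congr_deriv (by norm_num)
  exact ((hasDerivAt_sigmoid _).comp σ h).congr_deriv (mul_comm _ _)

lemma gaussianSigmoidMeanDeriv_eq_integral (c σ : ℝ) :
    gaussianSigmoidMeanDeriv c σ = ∫ x, gaussianPDFReal 0 1 x * ((x + σ) *
        (sigmoid (σ * x + σ ^ 2 / 2 - c) * (1 - sigmoid (σ * x + σ ^ 2 / 2 - c)))) := by
  symm
  rw [gaussianSigmoidMeanDeriv, ← integral_sub_right_eq_self _ σ, ← integral_const_mul]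
  congr 1 with y
  have hu : σ * (y - σ) + σ ^ 2 / 2 - c = σ * y - σ ^ 2 / 2 - c := by ring
  have htilt : exp (σ * y - σ ^ 2 / 2) = exp c * exp (σ * y - σ ^ 2 / 2 - c) := by
    rw [← exp_add]; congr 1; ring
  rw [hu, gaussianPDFReal_zero_one_sub, htilt, sub_add_cancel,
    ← exp_mul_sigmoid_mul_one_sub_sigmoid (σ * y - σ ^ 2 / 2 - c)]
  ring

lemma hasDerivAt_gaussianSigmoidMean (c σ₀ : ℝ) :
    HasDerivAt (gaussianSigmoidMean c) (gaussianSigmoidMeanDeriv c σ₀) σ₀ := by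
  rw [gaussianSigmoidMeanDeriv_eq_integral]
  refine (hasDerivAt_integral_of_dominated_loc_of_deriv_le (μ := volume)
    (F := fun σ x => gaussianPDFReal 0 1 x * sigmoid (σ * x + σ ^ 2 / 2 - c))
    (F' := fun σ x => gaussianPDFReal 0 1 x * ((x + σ) *
        (sigmoid (σ * x + σ ^ 2 / 2 - c) * (1 - sigmoid (σ * x + σ ^ 2 / 2 - c)))))
    (bound := fun x => gaussianPDFReal 0 1 x * ((|σ₀| + 1 + |x|) / 4))
    (Metric.ball_mem_nhds σ₀ one_pos) (.of_forall fun σ => ?_) ?_ ?_ ?_ ?_ ?_).2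
  · fun_prop
  · refine (integrable_gaussianPDFReal 0 1).mono' (by fun_prop) (ae_of_all _ fun x => ?_)
    rw [norm_mul, Real.norm_of_nonneg (gaussianPDFReal_nonneg 0 1 x),
      Real.norm_of_nonneg (sigmoid_nonneg _)]
    exact mul_le_of_le_one_right (gaussianPDFReal_nonneg 0 1 x) (sigmoid_le_one _)
  · fun_prop
  · refine ae_of_all _ fun x σ hσ => ?_
    have hσ' : |σ| ≤ |σ₀| + 1 := by
      have := abs_sub_abs_le_abs_sub σ σ₀
      rw [Metric.mem_ball, Real.dist_eq] at hσ
      linarith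
    set u := σ * x + σ ^ 2 / 2 - c
    rw [norm_mul, Real.norm_of_nonneg (gaussianPDFReal_nonneg 0 1 x), norm_mul,
      Real.norm_of_nonneg (sigmoid_mul_one_sub_sigmoid_nonneg u), Real.norm_eq_abs]
    refine mul_le_mul_of_nonneg_left ?_ (gaussianPDFReal_nonneg 0 1 x)
    calc |x + σ| * (sigmoid u * (1 - sigmoid u)) ≤ (|σ₀| + 1 + |x|) * (1 / 4) := by
          gcongr
          · exact sigmoid_mul_one_sub_sigmoid_nonneg u
          · linarith [abs_add_le x σ]
          · exact sigmoid_mul_one_sub_sigmoid_le u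
      _ = (|σ₀| + 1 + |x|) / 4 := by ring
  · have := ((integrable_gaussianPDFReal 0 1).const_mul ((|σ₀| + 1) / 4)).add
      (integrable_abs_mul_gaussianPDFReal.const_mul (1 / 4))
    refine this.congr (ae_of_all _ fun x => ?_)
    simp only [Pi.add_apply]
    ring
  · exact ae_of_all _ fun x σ _ => (hasDerivAt_sigmoid_quadratic c x σ).const_mul _

lemma continuous_gaussianSigmoidMeanDeriv (c : ℝ) :
    Continuous (gaussianSigmoidMeanDeriv c) := by
  refine continuous_const.mul (continuous_of_dominated (fun σ => by fun_prop)
    (fun σ => ae_of_all _ fun y => ?_) integrable_abs_mul_gaussianPDFReal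
    (ae_of_all _ fun y => by fun_prop))
  rw [norm_mul, norm_mul, Real.norm_eq_abs, Real.norm_of_nonneg (gaussianPDFReal_nonneg 0 1 y),
    Real.norm_of_nonneg (sq_nonneg _)]
  exact mul_le_of_le_one_right (mul_nonneg (abs_nonneg y) (gaussianPDFReal_nonneg 0 1 y))
    (pow_le_one₀ (sigmoid_nonneg _) (sigmoid_le_one _))

lemma gaussianSigmoidMeanDeriv_nonneg (c : ℝ) {σ : ℝ} (hσ : 0 ≤ σ) :
    0 ≤ gaussianSigmoidMeanDeriv c σ := by
  refine mul_nonneg (exp_pos c).le (integral_mul_gaussianPDFReal_mul_nonneg (C := 1) ?_ ?_)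
  · exact fun y y' h => pow_le_pow_left₀ (sigmoid_nonneg _)
      (sigmoid_le (by nlinarith)) 2
  · exact fun y => by
      rw [abs_of_nonneg (sq_nonneg _)]
      exact pow_le_one₀ (sigmoid_nonneg _) (sigmoid_le_one _)

lemma contDiff_gaussianSigmoidMean (c : ℝ) : ContDiff ℝ 1 (gaussianSigmoidMean c) := by
  rw [contDiff_one_iff_deriv,
    funext fun σ => (hasDerivAt_gaussianSigmoidMean c σ).deriv]
  exact ⟨fun σ => (hasDerivAt_gaussianSigmoidMean c σ).differentiableAt,
    continuous_gaussianSigmoidMeanDeriv c⟩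

lemma monotoneOn_gaussianSigmoidMean (c : ℝ) : MonotoneOn (gaussianSigmoidMean c) (Ici 0) :=
  monotoneOn_of_hasDerivWithinAt_nonneg (convex_Ici 0)
    (contDiff_gaussianSigmoidMean c).continuous.continuousOn
    (fun σ _ => (hasDerivAt_gaussianSigmoidMean c σ).hasDerivWithinAt)
    (fun _ hσ => gaussianSigmoidMeanDeriv_nonneg c (interior_subset hσ))

lemma mul_exp_div_add_mul_exp_eq_sigmoid {a b : ℝ} (ha : 0 < a) (hb : 0 < b) (A B : ℝ) :
    a * exp A / (a * exp A + b * exp B) = sigmoid (A - B - log (b / a)) := by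
  rw [sigmoid_def, neg_sub, sub_sub_eq_add_sub, exp_sub, exp_add, exp_log (div_pos hb ha)]
  field_simp

end GaussianSigmoid

namespace AsymIsing

open MeasureTheory ProbabilityTheory Real Set in
lemma gfun_eq_gaussianSigmoidMean {π1 π2 : ℝ} (hpi1 : 0 < π1) (hpi2 : 0 < π2)
    (hsum : π1 + π2 = 1) {s : ℝ} (hs : 0 ≤ s) :
    gfun π1 π2 s = gaussianSigmoidMean (log (π2 / π1)) (√s / (√π1 * π2)) - π1 := by
  rw [gfun, integral_gaussianReal_eq_integral_smul one_ne_zero, gaussianSigmoidMean]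
  congr 2 with w
  rw [smul_eq_mul, mul_exp_div_add_mul_exp_eq_sigmoid hpi1 hpi2]
  congr 3
  obtain ⟨q, hq, rfl⟩ : ∃ q, 0 < q ∧ π1 = q ^ 2 :=
    ⟨√π1, sqrt_pos.2 hpi1, (sq_sqrt hpi1.le).symm⟩
  obtain ⟨t, ht, rfl⟩ : ∃ t, 0 ≤ t ∧ s = t ^ 2 := ⟨√s, sqrt_nonneg s, (sq_sqrt hs).symm⟩
  obtain rfl : π2 = 1 - q ^ 2 := by linarith
  rw [sqrt_sq hq.le, sqrt_sq ht]
  field_simp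
  ring

theorem gfun_contDiff_and_monotone_general (π1 π2 : ℝ) (hpi1 : 0 < π1) (hpi2 : 0 < π2)
    (hsum : π1 + π2 = 1) :
    ContDiffOn ℝ 1 (gfun π1 π2) (Set.Ioc 0 π2) ∧
      MonotoneOn (gfun π1 π2) (Set.Ioc 0 π2) := by
  set c := Real.log (π2 / π1)
  set σ : ℝ → ℝ := fun s => √s / (√π1 * π2)
  have hgfun :
      Set.EqOn (gfun π1 π2) (fun s => gaussianSigmoidMean c (σ s) - π1) (Set.Ioc 0 π2) :=
    fun s hs => gfun_eq_gaussianSigmoidMean hpi1 hpi2 hsum hs.1.le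
  have hσ_nonneg : ∀ s, 0 ≤ σ s := fun s => by positivity
  have hσ_mono : Monotone σ := fun s t hst =>
    div_le_div_of_nonneg_right (Real.sqrt_le_sqrt hst) (by positivity)
  have hσ_smooth : ContDiffOn ℝ 1 σ (Set.Ioc 0 π2) := fun s hs =>
    ((Real.contDiffAt_sqrt hs.1.ne').div_const _).contDiffWithinAt
  refine ⟨?_, fun s hs t ht hst => ?_⟩
  · exact (((contDiff_gaussianSigmoidMean c).comp_contDiffOn hσ_smooth).sub
      contDiffOn_const).congr hgfun
  · rw [hgfun hs, hgfun ht]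
    exact sub_le_sub_right (monotoneOn_gaussianSigmoidMean c (hσ_nonneg s) (hσ_nonneg t)
      (hσ_mono hst)) π1

/-- The Gaussian-approximation function `f` is continuously
differentiable and monotone increasing on the interval `(0, π₂]`. -/
theorem gfun_contDiff_and_monotone (π1 π2 : ℝ) (hpi1 : 0 < π1) (hpi2 : 0 < π2)
    (hsum : π1 + π2 = 1) (hord : π2 ≤ π1) :
    ContDiffOn ℝ 1 (gfun π1 π2) (Set.Ioc 0 π2) ∧
      MonotoneOn (gfun π1 π2) (Set.Ioc 0 π2) :=
  gfun_contDiff_and_monotone_general π1 π2 hpi1 hpi2 hsum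

end AsymIsing
end
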